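/- arXiv:1808.01636 — 2 statements merged into one kernel-verified Lean document; each statement's English description precedes it below -/
import Mathlib

section
/- If p_α and p_β are conditions in Q(H̄) with γ^{p_α} = γ^{p_β}, e^{p_α} = e^{p_β}, u^{p_α} = u^{p_β}, and h^{p_α} = h^{p_β}, then p_α and p_β are compatible in Q(H̄). -/
open Ordinal Set Cardinal

noncomputable section

/-- A "sequence" coded as (length, values padded by 0 off the domain). -/
abbrev OSeq : Type 1 := Ordinal × (Ordinal → Ordinal)

/-- The restriction `f↾α` of `f` to ordinals below `α`. -/
def restr (f : Ordinal → Ordinal) (α : Ordinal) : OSeq :=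
  (α, fun β => if β < α then f β else 0)

/-- `s` is a sequence of length `< κ` with values `< κ`. -/
def IsSeq (κ : Cardinal) (s : OSeq) : Prop :=
  s.1 < κ.ord ∧ (∀ β < s.1, s.2 β < κ.ord) ∧ ∀ β, ¬ β < s.1 → s.2 β = 0

/-- A condition of the forcing Q(H̄): a tuple (γ, e, v, u, h) where γ < κ,
e ⊆ γ+1 is closed with max(e) = γ, v ∈ [F]^{<κ} with distinct members
separated at γ, and h is a partial function with domain
u = {f↾α : α ∈ e, f ∈ v} and values in κ^{<κ}. -/
structure Cond (κ : Cardinal) (F : Set (Ordinal → Ordinal)) where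
  γ : Ordinal
  e : Set Ordinal
  v : Set (Ordinal → Ordinal)
  h : OSeq → Option OSeq
  γ_lt : γ < κ.ord
  e_sub : e ⊆ Set.Iic γ
  e_closed : ∀ S ⊆ e, S.Nonempty → sSup S ∈ e
  γ_mem : γ ∈ e
  v_sub : v ⊆ F
  v_small : #v < Cardinal.lift.{1,0} κ
  sep : ∀ f ∈ v, ∀ g ∈ v, f ≠ g → restr f γ ≠ restr g γ
  h_dom : ∀ s, (h s ≠ none) ↔ ∃ f ∈ v, ∃ α ∈ e, s = restr f α
  h_seq : ∀ s t, h s = some t → IsSeq κ t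

/-- The set u of a condition: all restrictions f↾α, f ∈ v, α ∈ e. -/
def Cond.u {κ : Cardinal} {F : Set (Ordinal → Ordinal)} (p : Cond κ F) : Set OSeq :=
  {s | ∃ f ∈ p.v, ∃ α ∈ p.e, s = restr f α}

/-- The order of Q(H̄): p ≤ q iff γᵖ ≤ γ^q, eᵖ = e^q ∩ (γᵖ+1), vᵖ ⊆ v^q,
hᵖ ⊆ h^q, and h^q(f↾α) = H_f(α) for f ∈ vᵖ and α ∈ e^q \ eᵖ. -/
def Qle {κ : Cardinal} {F : Set (Ordinal → Ordinal)}
    (H : (Ordinal → Ordinal) → Ordinal → OSeq) (p q : Cond κ F) : Prop :=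
  p.γ ≤ q.γ ∧ p.e = q.e ∩ Set.Iic p.γ ∧ p.v ⊆ q.v ∧
  (∀ s t, p.h s = some t → q.h s = some t) ∧
  ∀ f ∈ p.v, ∀ α ∈ q.e, α ∉ p.e → q.h (restr f α) = some (H f α)

/-- Compatibility: a common upper bound exists. -/
def Compat {κ : Cardinal} {F : Set (Ordinal → Ordinal)}
    (H : (Ordinal → Ordinal) → Ordinal → OSeq) (p q : Cond κ F) : Prop :=
  ∃ r, Qle H p r ∧ Qle H q r

/-!
Let `V = vᵖ ∪ v^q`, a set of fewer than `κ` functions. By regularity of `κ`, the points at which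
members of `V` differ are bounded by some `γ < κ` above `γᵖ`, so restriction to `γ` is injective
on `V`. Adding `γ` on top of `eᵖ`, taking `v = V`, and extending `hᵖ` by `f↾γ ↦ H_f(γ)` gives a
condition; its domain is right because `uᵖ = u^q`, and it extends both `p` and `q` since they share
`γ`, `e` and `h`.
-/

theorem sSup_mem_insert_of_forall_le {α : Type*} [ConditionallyCompleteLattice α] {e : Set α}
    {a : α} (he : ∀ S ⊆ e, S.Nonempty → sSup S ∈ e) (hea : ∀ x ∈ e, x ≤ a) :
    ∀ S ⊆ insert a e, S.Nonempty → sSup S ∈ insert a e := by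
  intro S hS hSne
  by_cases haS : a ∈ S
  · have hmax : IsGreatest S a := ⟨haS, fun x hx => (hS hx).elim (·.le) (hea x)⟩
    exact hmax.csSup_eq ▸ mem_insert a e
  · have hSe : S ⊆ e := fun x hx => (hS hx).resolve_left (ne_of_mem_of_not_mem hx haS)
    exact mem_insert_of_mem a (he S hSe hSne)

theorem restr_fst (f : Ordinal → Ordinal) (α : Ordinal) : (restr f α).1 = α := rfl

theorem restr_ne_restr_of_lt {f g : Ordinal → Ordinal} {β γ : Ordinal} (hβγ : β < γ)
    (hfg : f β ≠ g β) : restr f γ ≠ restr g γ := by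
  intro h
  have h' := congrArg (fun s : OSeq => s.2 β) h
  simp only [restr, if_pos hβγ] at h'
  exact hfg h'

theorem exists_lt_ord_restr_injOn {κ : Cardinal.{0}} (hreg : κ.IsRegular)
    {V : Set (Ordinal → Ordinal)} (hV : #V < lift.{1} κ)
    (hsep : ∀ f ∈ V, ∀ g ∈ V, f ≠ g → ∃ β < κ.ord, f β ≠ g β) {δ : Ordinal} (hδ : δ < κ.ord) :
    ∃ γ, δ < γ ∧ γ < κ.ord ∧ ∀ f ∈ V, ∀ g ∈ V, f ≠ g → restr f γ ≠ restr g γ := by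
  have hκ : Order.IsSuccLimit κ.ord := isSuccLimit_ord hreg.aleph0_le
  have hsep' : ∀ x : V × V, ∃ β < κ.ord, x.1.1 ≠ x.2.1 → x.1.1 β ≠ x.2.1 β := by
    rintro ⟨⟨f, hf⟩, ⟨g, hg⟩⟩
    by_cases hfg : f = g
    · exact ⟨0, hκ.bot_lt, fun h => (h hfg).elim⟩
    · obtain ⟨β, hβ, hne⟩ := hsep f hf g hg hfg
      exact ⟨β, hβ, fun _ => hne⟩
  choose β hβκ hβsep using hsep'
  have hcard : lift.{0} #(V × V) < (Ordinal.lift.{1} κ.ord).cof := by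
    rw [Cardinal.lift_uzero, ← Ordinal.lift_cof, hreg.cof_ord, mk_prod, Cardinal.lift_id]
    exact mul_lt_of_lt (aleph0_le_lift.2 hreg.aleph0_le) hV hV
  have hsup : ⨆ x, β x + 1 < κ.ord := Ordinal.lift_iSup_add_one_lt_of_lt_cof hcard hβκ
  have hbdd : BddAbove (range fun x => β x + 1) := by
    refine ⟨κ.ord, ?_⟩
    rintro _ ⟨x, rfl⟩
    exact Order.add_one_le_of_lt (hβκ x)
  refine ⟨max (δ + 1) (⨆ x, β x + 1), lt_max_of_lt_left (lt_add_one δ),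
    max_lt (hκ.succ_lt hδ) hsup, fun f hf g hg hfg => ?_⟩
  let x : V × V := (⟨f, hf⟩, ⟨g, hg⟩)
  refine restr_ne_restr_of_lt ?_ (hβsep x hfg)
  calc β x < β x + 1 := lt_add_one _
    _ ≤ ⨆ x, β x + 1 := le_ciSup hbdd x
    _ ≤ _ := le_max_right _ _

open Classical in
/-- The choice of `f` in `s = restr f γ` is immaterial as soon as `restr · γ` is injective on `V`. -/
def extendAt (h : OSeq → Option OSeq) (H : (Ordinal → Ordinal) → Ordinal → OSeq)
    (V : Set (Ordinal → Ordinal)) (γ : Ordinal) (s : OSeq) : Option OSeq :=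
  if s.1 = γ then if hs : ∃ f ∈ V, s = restr f γ then some (H hs.choose γ) else none else h s

section extendAt

variable {h : OSeq → Option OSeq} {H : (Ordinal → Ordinal) → Ordinal → OSeq}
  {V : Set (Ordinal → Ordinal)} {γ : Ordinal} {s : OSeq}

theorem extendAt_of_fst_ne (hs : s.1 ≠ γ) : extendAt h H V γ s = h s := by
  simp only [extendAt, if_neg hs]

theorem extendAt_ne_none_iff_of_fst_eq (hs : s.1 = γ) :
    extendAt h H V γ s ≠ none ↔ ∃ f ∈ V, s = restr f γ := by
  by_cases hex : ∃ f ∈ V, s = restr f γ <;> simp [extendAt, hs, hex]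

theorem extendAt_restr (hinj : ∀ f ∈ V, ∀ g ∈ V, f ≠ g → restr f γ ≠ restr g γ)
    {f : Ordinal → Ordinal} (hf : f ∈ V) : extendAt h H V γ (restr f γ) = some (H f γ) := by
  have hex : ∃ g ∈ V, restr f γ = restr g γ := ⟨f, hf, rfl⟩
  have hchoose : hex.choose = f := by
    by_contra hne
    exact hinj _ hex.choose_spec.1 f hf hne hex.choose_spec.2.symm
  simp only [extendAt, restr_fst, if_true, dif_pos hex, hchoose]

theorem isSeq_of_extendAt_eq_some {κ : Cardinal} {F : Set (Ordinal → Ordinal)}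
    (hH : ∀ f ∈ F, ∀ α < κ.ord, IsSeq κ (H f α)) (hVF : V ⊆ F) (hγ : γ < κ.ord)
    (hh : ∀ s t, h s = some t → IsSeq κ t) {t : OSeq} (hst : extendAt h H V γ s = some t) :
    IsSeq κ t := by
  by_cases hs : s.1 = γ
  · by_cases hex : ∃ f ∈ V, s = restr f γ
    · simp only [extendAt, if_pos hs, dif_pos hex, Option.some_inj] at hst
      exact hst ▸ hH _ (hVF hex.choose_spec.1) γ hγ
    · simp [extendAt, hs, hex] at hst
  · rw [extendAt_of_fst_ne hs] at hst
    exact hh s t hst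

end extendAt

namespace Cond

variable {κ : Cardinal} {F : Set (Ordinal → Ordinal)}

theorem fst_le_of_h_ne_none (p : Cond κ F) {s : OSeq} (hs : p.h s ≠ none) : s.1 ≤ p.γ := by
  obtain ⟨f, -, α, hα, rfl⟩ := (p.h_dom s).1 hs
  exact p.e_sub hα

theorem insert_inter_Iic_eq (p : Cond κ F) {γ : Ordinal} (hγ : p.γ < γ) :
    insert γ p.e ∩ Iic p.γ = p.e := by
  rw [insert_inter_of_notMem (show γ ∉ Iic p.γ from not_le_of_gt hγ), inter_eq_left.2 p.e_sub]

theorem exists_extension (p : Cond κ F) {H : (Ordinal → Ordinal) → Ordinal → OSeq}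
    (hH : ∀ f ∈ F, ∀ α < κ.ord, IsSeq κ (H f α)) {V : Set (Ordinal → Ordinal)} (hVF : V ⊆ F)
    (hV : #V < lift.{1} κ) (hpV : p.v ⊆ V) (hVu : ∀ f ∈ V, ∀ α ∈ p.e, restr f α ∈ p.u)
    {γ : Ordinal} (hpγ : p.γ < γ) (hγ : γ < κ.ord)
    (hinj : ∀ f ∈ V, ∀ g ∈ V, f ≠ g → restr f γ ≠ restr g γ) :
    ∃ r : Cond κ F, r.γ = γ ∧ r.e = insert γ p.e ∧ r.v = V ∧
      (∀ s, s.1 ≠ γ → r.h s = p.h s) ∧ ∀ f ∈ V, r.h (restr f γ) = some (H f γ) := by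
  have he_lt : ∀ α ∈ p.e, α < γ := fun α hα => (p.e_sub hα).trans_lt hpγ
  refine ⟨{
    γ := γ
    e := insert γ p.e
    v := V
    h := extendAt p.h H V γ
    γ_lt := hγ
    e_sub := insert_subset self_mem_Iic fun α hα => (he_lt α hα).le
    e_closed := sSup_mem_insert_of_forall_le p.e_closed fun α hα => (he_lt α hα).le
    γ_mem := mem_insert γ p.e
    v_sub := hVF
    v_small := hV
    sep := hinj
    h_dom := fun s => ?_
    h_seq := fun s t => isSeq_of_extendAt_eq_some hH hVF hγ p.h_seq }, rfl, rfl, rfl,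
    fun s => extendAt_of_fst_ne, fun f => extendAt_restr hinj⟩
  by_cases hs : s.1 = γ
  · rw [extendAt_ne_none_iff_of_fst_eq hs]
    constructor
    · rintro ⟨f, hf, rfl⟩
      exact ⟨f, hf, γ, mem_insert γ p.e, rfl⟩
    · rintro ⟨f, hf, α, -, rfl⟩
      exact ⟨f, hf, hs ▸ rfl⟩
  · rw [extendAt_of_fst_ne hs, p.h_dom s]
    constructor
    · rintro ⟨f, hf, α, hα, rfl⟩
      exact ⟨f, hpV hf, α, mem_insert_of_mem γ hα, rfl⟩
    · rintro ⟨f, hf, α, hα | hα, rfl⟩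
      · exact (hs hα).elim
      · exact hVu f hf α hα

theorem qle_of_insert_top {H : (Ordinal → Ordinal) → Ordinal → OSeq} {q r : Cond κ F}
    (hγ : q.γ < r.γ) (he : r.e = insert r.γ q.e) (hv : q.v ⊆ r.v)
    (hold : ∀ s, s.1 ≠ r.γ → r.h s = q.h s)
    (hnew : ∀ f ∈ q.v, r.h (restr f r.γ) = some (H f r.γ)) : Qle H q r := by
  refine ⟨hγ.le, by rw [he, q.insert_inter_Iic_eq hγ], hv, fun s t hst => ?_,
    fun f hf α hα hαq => ?_⟩
  · have hs : s.1 ≤ q.γ := q.fst_le_of_h_ne_none (by simp [hst])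
    rwa [hold s (hs.trans_lt hγ).ne]
  · obtain rfl : α = r.γ := (he ▸ hα).resolve_right hαq
    exact hnew f hf

end Cond

theorem stmt7_general (κ : Cardinal) (hreg : κ.IsRegular)
    (F : Set (Ordinal → Ordinal))
    (hFsep : ∀ f ∈ F, ∀ g ∈ F, f ≠ g → ∃ β < κ.ord, f β ≠ g β)
    (H : (Ordinal → Ordinal) → Ordinal → OSeq)
    (hH : ∀ f ∈ F, ∀ α < κ.ord, IsSeq κ (H f α))
    (p q : Cond κ F)
    (h1 : p.γ = q.γ) (h2 : p.e = q.e) (h3 : p.u = q.u) (h4 : p.h = q.h) :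
    Compat H p q := by
  set V := p.v ∪ q.v
  have hVF : V ⊆ F := union_subset p.v_sub q.v_sub
  have hV : #V < lift.{1} κ := (mk_union_le _ _).trans_lt
    (add_lt_of_lt (aleph0_le_lift.2 hreg.aleph0_le) p.v_small q.v_small)
  have hVu : ∀ f ∈ V, ∀ α ∈ p.e, restr f α ∈ p.u := by
    rintro f (hf | hf) α hα
    · exact ⟨f, hf, α, hα, rfl⟩
    · exact h3 ▸ ⟨f, hf, α, h2 ▸ hα, rfl⟩
  obtain ⟨γ, hpγ, hγ, hinj⟩ := exists_lt_ord_restr_injOn hreg hV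
    (fun f hf g hg => hFsep f (hVF hf) g (hVF hg)) p.γ_lt
  obtain ⟨r, rfl, hre, hrv, hold, hnew⟩ :=
    p.exists_extension hH hVF hV subset_union_left hVu hpγ hγ hinj
  have hle (c : Cond κ F) (hγ : c.γ = p.γ) (he : c.e = p.e) (hh : c.h = p.h) (hv : c.v ⊆ V) :
      Qle H c r :=
    Cond.qle_of_insert_top (hγ ▸ hpγ) (he ▸ hre) (hrv ▸ hv) (hh ▸ hold) fun f hf => hnew f (hv hf)
  exact ⟨r, hle p rfl rfl rfl subset_union_left, hle q h1.symm h2.symm h4.symm subset_union_right⟩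

/-- Conditions with the same γ, e, u and h are compatible. -/
theorem stmt7 (κ : Cardinal) (hreg : κ.IsRegular) (hunc : ℵ₀ < κ)
    (F : Set (Ordinal → Ordinal))
    (hFsep : ∀ f ∈ F, ∀ g ∈ F, f ≠ g → ∃ β < κ.ord, f β ≠ g β)
    (H : (Ordinal → Ordinal) → Ordinal → OSeq)
    (hH : ∀ f ∈ F, ∀ α < κ.ord, IsSeq κ (H f α))
    (p q : Cond κ F)
    (h1 : p.γ = q.γ) (h2 : p.e = q.e) (h3 : p.u = q.u) (h4 : p.h = q.h) :
    Compat H p q :=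
  stmt7_general κ hreg F hFsep H hH p q h1 h2 h3 h4
end
end

section
/- Suppose κ is regular uncountable, E ⊆ κ is a club, h_n : κ^{<κ} ⇀ κ^{<κ} (n < ω) are partial functions, E^n ⊆ κ are clubs with E ⊆ E^n, and H_f^n(α) = f↾min(⋂_{k<n} E^k \ (α+1)) for each f in a family F ⊆ κ^κ of size κ⁺. Assume that for every f ∈ F and n < ω there is α_n^f ∈ E such that for all α ∈ E^n with α ≥ α_n^f, f↾α ∈ dom(h_n) and h_n(f↾α) = H_f^n(α). Then F has cardinality at most κ, a contradiction; equivalently, no such system (E, ⟨E^n⟩, ⟨h_n⟩) exists when |F| = κ⁺. -/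
open Ordinal Set Cardinal

noncomputable section

/-- `E` is a club (closed unbounded) subset of (the ordinals below) `o`. -/
def IsClubIn (o : Ordinal) (E : Set Ordinal) : Prop :=
  E ⊆ Set.Iio o ∧ (∀ S ⊆ E, S.Nonempty → sSup S < o → sSup S ∈ E) ∧
    ∀ α < o, ∃ β ∈ E, α ≤ β

theorem restr_eq_restr_iff {f g : Ordinal → Ordinal} {α : Ordinal} :
    restr f α = restr g α ↔ ∀ γ < α, f γ = g γ := by
  refine ⟨fun h γ hγ => ?_, fun h => ?_⟩
  · simpa [restr, hγ] using congrFun (congrArg Prod.snd h) γ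
  · simp only [restr, Prod.mk.injEq, true_and]
    funext γ
    split_ifs with hγ
    exacts [h γ hγ, rfl]

theorem restr_isSeq {κ : Cardinal} {f : Ordinal → Ordinal} {α : Ordinal} (hα : α < κ.ord)
    (hf : ∀ β < α, f β < κ.ord) : IsSeq κ (restr f α) :=
  ⟨hα, fun β hβ => by simpa [restr, show β < α from hβ] using hf β hβ,
    fun β hβ => by simp [restr, show ¬β < α from hβ]⟩

theorem mk_isSeq_le {κ : Cardinal} (hκ : ℵ₀ ≤ κ) (hpow : κ ^< κ = κ) :
    #{s : OSeq // IsSeq κ s} ≤ lift.{1} κ := by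
  let code : {s : OSeq // IsSeq κ s} → Σ α : Iio κ.ord, (Iio α.1 → Iio κ.ord) :=
    fun s => ⟨⟨s.1.1, s.2.1⟩, fun β => ⟨s.1.2 β, s.2.2.1 β β.2⟩⟩
  have hcode : Function.Injective code := by
    rintro ⟨⟨l, v₁⟩, h₁⟩ ⟨⟨l', v₂⟩, h₂⟩ hq
    obtain rfl : l = l' := congrArg (fun p => p.1.1) hq
    refine Subtype.ext (Prod.ext rfl (funext fun β => ?_))
    by_cases hβ : β < l
    · exact congrArg Subtype.val (congrFun (eq_of_heq (Sigma.ext_iff.1 hq).2) ⟨β, hβ⟩)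
    · exact (h₁.2.2 β hβ).trans (h₂.2.2 β hβ).symm
  have hfiber : ∀ α : Iio κ.ord, #(Iio α.1 → Iio κ.ord) ≤ lift.{1} κ := fun α => by
    rw [← power_def, Cardinal.mk_Iio_ordinal, Cardinal.mk_Iio_ordinal, card_ord,
      ← Cardinal.lift_power, Cardinal.lift_le]
    exact (le_powerlt κ (lt_ord.1 α.2)).trans hpow.le
  calc #{s : OSeq // IsSeq κ s}
      ≤ #(Σ α : Iio κ.ord, (Iio α.1 → Iio κ.ord)) := mk_le_of_injective hcode
    _ ≤ sum fun _ : Iio κ.ord => lift.{1} κ := (mk_sigma _).trans_le (sum_le_sum _ _ hfiber)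
    _ = lift.{1} κ := by
      rw [sum_const', Cardinal.mk_Iio_ordinal, card_ord, ← Cardinal.lift_mul, mul_eq_self hκ]

theorem Ordinal.iSup_nat_lt_of_aleph0_lt_cof {o : Ordinal} (ho : ℵ₀ < o.cof) {g : ℕ → Ordinal}
    (hg : ∀ n, g n < o) : ⨆ n, g n < o :=
  lift_iSup_lt_of_lt_cof (by simpa [lift_cof] using ho) hg

namespace IsClubIn

variable {o : Ordinal} {C : Set Ordinal}

theorem sInf_inter_Ici_mem (hC : IsClubIn o C) {α : Ordinal} (hα : α < o) :
    sInf (C ∩ Ici α) ∈ C ∩ Ici α :=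
  csInf_mem (hC.2.2 α hα)

theorem exists_gt (hC : IsClubIn o C) (ho : Order.IsSuccLimit o) {α : Ordinal} (hα : α < o) :
    ∃ β ∈ C, α < β :=
  (hC.2.2 _ (ho.succ_lt hα)).imp fun _ ⟨hβ, hαβ⟩ => ⟨hβ, Order.succ_le_iff.1 hαβ⟩

theorem iSup_mem (hC : IsClubIn o C) {g : ℕ → Ordinal} (hg : Monotone g)
    (hfreq : ∃ᶠ n in Filter.atTop, g n ∈ C) (hlt : ⨆ n, g n < o) : ⨆ n, g n ∈ C := by
  obtain ⟨n₀, hn₀⟩ := (Filter.frequently_atTop.1 hfreq) 0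
  have hsup : sSup (g '' {n | g n ∈ C}) = ⨆ n, g n := by
    refine le_antisymm (csSup_le_csSup Ordinal.bddAbove_of_small ⟨_, n₀, hn₀.2, rfl⟩
      (image_subset_range _ _)) (ciSup_le fun m => ?_)
    obtain ⟨n, hmn, hn⟩ := Filter.frequently_atTop.1 hfreq m
    exact (hg hmn).trans
      (le_csSup (Ordinal.bddAbove_of_small.mono (image_subset_range _ _)) ⟨n, hn, rfl⟩)
  rw [← hsup] at hlt ⊢
  exact hC.2.1 _ (image_subset_iff.2 fun _ hn => hn) ⟨_, n₀, hn₀.2, rfl⟩ hlt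

theorem iInter {E : ℕ → Set Ordinal} (ho : ℵ₀ < o.cof) (hE : ∀ n, IsClubIn o (E n)) :
    IsClubIn o (⋂ n, E n) := by
  refine ⟨(iInter_subset _ 0).trans (hE 0).1, fun S hS hne hlt => mem_iInter.2 fun n =>
    (hE n).2.1 S (hS.trans (iInter_subset _ n)) hne hlt, fun α hα => ?_⟩
  let next (n : ℕ) (x : Ordinal) : Ordinal := sInf (E n ∩ Ici x)
  have hnext (n : ℕ) {x : Ordinal} (hx : x < o) : next n x ∈ E n ∩ Ici x :=
    (hE n).sInf_inter_Ici_mem hx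
  -- visit every `E n` infinitely often, the `m`-th step going to `E (m.unpair.1)`
  let g : ℕ → Ordinal := fun m => Nat.rec α (fun m x => next m.unpair.1 x) m
  have hg_lt (m : ℕ) : g m < o := by
    induction m with
    | zero => exact hα
    | succ m ih => exact (hE _).1 (hnext _ ih).1
  have hg_mono : Monotone g := monotone_nat_of_le_succ fun m => (hnext _ (hg_lt m)).2
  have hsup : ⨆ m, g m < o := iSup_nat_lt_of_aleph0_lt_cof ho hg_lt
  refine ⟨⨆ m, g m, mem_iInter.2 fun n => ?_, le_ciSup Ordinal.bddAbove_of_small 0⟩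
  refine (hE n).iSup_mem hg_mono (Filter.frequently_atTop.2 fun m => ?_) hsup
  refine ⟨Nat.pair n m + 1, (Nat.right_le_pair n m).trans (Nat.le_succ _), ?_⟩
  show next (Nat.unpair (Nat.pair n m)).1 (g (Nat.pair n m)) ∈ E n
  rw [Nat.unpair_pair]
  exact (hnext n (hg_lt _)).1

theorem forall_lt_of_step (hC : IsClubIn o C) {Q : Ordinal → Prop} {A : Ordinal} (hA : A ∈ C)
    (hbase : ∀ γ < A, Q γ)
    (hstep : ∀ σ ∈ C, A ≤ σ → (∀ γ < σ, Q γ) → ∃ τ ∈ C, σ < τ ∧ ∀ γ < τ, Q γ) :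
    ∀ γ < o, Q γ := by
  by_contra! ⟨γ, hγ, hQγ⟩
  let T := {α ∈ C | A ≤ α ∧ α ≤ γ ∧ ∀ β < α, Q β}
  have hAT : A ∈ T := ⟨hA, le_rfl, not_lt.1 fun h => hQγ (hbase γ h), hbase⟩
  have hT : BddAbove T := ⟨γ, fun _ hx => hx.2.2.1⟩
  have hσγ : sSup T ≤ γ := csSup_le ⟨A, hAT⟩ fun _ hx => hx.2.2.1
  have hσC : sSup T ∈ C := hC.2.1 T (fun _ hx => hx.1) ⟨A, hAT⟩ (hσγ.trans_lt hγ)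
  have hAσ : A ≤ sSup T := le_csSup hT hAT
  have hQσ : ∀ β < sSup T, Q β := fun β hβ => by
    obtain ⟨α, hαT, hβα⟩ := (lt_csSup_iff hT ⟨A, hAT⟩).1 hβ
    exact hαT.2.2.2 β hβα
  obtain ⟨τ, hτC, hστ, hQτ⟩ := hstep _ hσC hAσ hQσ
  have hτγ : τ ≤ γ := not_lt.1 fun h => hQγ (hQτ γ h)
  exact (le_csSup hT ⟨hτC, hAσ.trans hστ.le, hτγ, hQτ⟩).not_gt hστ

end IsClubIn

/-- `nextIn E n α` is the paper's `min (⋂_{k<n} Eᵏ \ (α + 1))`. -/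
def nextIn (E : ℕ → Set Ordinal) (n : ℕ) (α : Ordinal) : Ordinal :=
  sInf {β | α < β ∧ ∀ k < n, β ∈ E k}

section NextIn

variable {o : Ordinal} {E : ℕ → Set Ordinal} {α : Ordinal}

theorem nextIn_spec (hE : IsClubIn o (⋂ n, E n)) (ho : Order.IsSuccLimit o) (hα : α < o)
    (n : ℕ) : α < nextIn E n α ∧ (∀ k < n, nextIn E n α ∈ E k) ∧ nextIn E n α < o := by
  obtain ⟨β, hβ, hαβ⟩ := hE.exists_gt ho hα
  have hβmem : β ∈ {β | α < β ∧ ∀ k < n, β ∈ E k} := ⟨hαβ, fun k _ => mem_iInter.1 hβ k⟩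
  obtain ⟨hα_lt, hmem⟩ := csInf_mem ⟨β, hβmem⟩
  exact ⟨hα_lt, hmem, (csInf_le' hβmem).trans_lt (hE.1 hβ)⟩

theorem nextIn_mono (hE : IsClubIn o (⋂ n, E n)) (ho : Order.IsSuccLimit o) (hα : α < o) :
    Monotone (nextIn E · α) := fun m n hmn => by
  obtain ⟨hα_lt, hmem, -⟩ := nextIn_spec hE ho hα n
  exact csInf_le_csInf (OrderBot.bddBelow _) ⟨_, hα_lt, hmem⟩
    fun β ⟨hαβ, hβ⟩ => ⟨hαβ, fun k hk => hβ k (hk.trans_le hmn)⟩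

theorem iSup_nextIn_mem (ho : ℵ₀ < o.cof) (hE : ∀ n, IsClubIn o (E n)) (hα : α < o) :
    α < ⨆ n, nextIn E n α ∧ ⨆ n, nextIn E n α ∈ ⋂ n, E n := by
  have hlim : Order.IsSuccLimit o := one_lt_cof_iff.1 (one_lt_aleph0.trans ho)
  have hC := IsClubIn.iInter ho hE
  have hspec := nextIn_spec hC hlim hα
  have hlt : ⨆ n, nextIn E n α < o := iSup_nat_lt_of_aleph0_lt_cof ho fun n => (hspec n).2.2
  refine ⟨(hspec 0).1.trans_le (le_ciSup Ordinal.bddAbove_of_small 0), mem_iInter.2 fun k => ?_⟩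
  refine (hE k).iSup_mem (nextIn_mono hC hlim hα) ?_ hlt
  exact ((Filter.eventually_gt_atTop k).mono fun n hn => (hspec n).2.1 k hn).frequently

end NextIn

section Uniformization

variable {o : Ordinal} {E : ℕ → Set Ordinal}

def Uniformizes (h : ℕ → OSeq → Option OSeq) (E : ℕ → Set Ordinal) (f : Ordinal → Ordinal)
    (b : Ordinal) : Prop :=
  ∀ n, ∀ α ∈ E n, b ≤ α → h n (restr f α) = some (restr f (nextIn E n α))

theorem exists_lt_uniformizes (ho : ℵ₀ < o.cof) {h : ℕ → OSeq → Option OSeq}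
    {f : Ordinal → Ordinal}
    (hf : ∀ n, ∃ a < o, ∀ α ∈ E n, a ≤ α → h n (restr f α) = some (restr f (nextIn E n α))) :
    ∃ b < o, Uniformizes h E f b := by
  choose a hao ha using hf
  exact ⟨⨆ n, a n, iSup_nat_lt_of_aleph0_lt_cof ho hao,
    fun n α hα hbα => ha n α hα ((le_ciSup Ordinal.bddAbove_of_small n).trans hbα)⟩

theorem forall_lt_iSup_nextIn_eq {h : ℕ → OSeq → Option OSeq} {f g : Ordinal → Ordinal}
    {σ : Ordinal} (hf : ∀ n, h n (restr f σ) = some (restr f (nextIn E n σ)))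
    (hg : ∀ n, h n (restr g σ) = some (restr g (nextIn E n σ)))
    (hfg : restr f σ = restr g σ) : ∀ γ < ⨆ n, nextIn E n σ, f γ = g γ := fun γ hγ => by
  obtain ⟨n, hn⟩ := Ordinal.lt_iSup_iff.1 hγ
  have hres : restr f (nextIn E n σ) = restr g (nextIn E n σ) :=
    Option.some.inj (by rw [← hf n, hfg, hg n])
  exact restr_eq_restr_iff.1 hres γ hn

theorem forall_lt_eq_of_uniformizes (ho : ℵ₀ < o.cof) (hE : ∀ n, IsClubIn o (E n))
    {h : ℕ → OSeq → Option OSeq} {f g : Ordinal → Ordinal} {bf bg A : Ordinal}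
    (hf : Uniformizes h E f bf) (hg : Uniformizes h E g bg) (hA : A ∈ ⋂ n, E n)
    (hfA : bf ≤ A) (hgA : bg ≤ A) (hfg : restr f A = restr g A) : ∀ γ < o, f γ = g γ := by
  have hC := IsClubIn.iInter ho hE
  refine hC.forall_lt_of_step hA (restr_eq_restr_iff.1 hfg) fun σ hσ hAσ hσeq => ?_
  obtain ⟨hσlt, hmem⟩ := iSup_nextIn_mem ho hE (hC.1 hσ)
  exact ⟨_, hmem, hσlt, forall_lt_iSup_nextIn_eq
    (fun n => hf n σ (mem_iInter.1 hσ n) (hfA.trans hAσ))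
    (fun n => hg n σ (mem_iInter.1 hσ n) (hgA.trans hAσ)) (restr_eq_restr_iff.2 hσeq)⟩

end Uniformization

theorem stmt10_general (κ : Cardinal) (hreg : κ.IsRegular) (hunc : ℵ₀ < κ)
    (hpow : κ ^< κ = κ)
    (F : Set (Ordinal → Ordinal))
    (hF : #F = Cardinal.lift.{1,0} (Order.succ κ))
    (hFrange : ∀ f ∈ F, ∀ β < κ.ord, f β < κ.ord)
    (hFsep : ∀ f ∈ F, ∀ g ∈ F, f ≠ g → ∃ β < κ.ord, f β ≠ g β)
    (E : Set Ordinal) (hE : IsClubIn κ.ord E)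
    (E' : ℕ → Set Ordinal) (hE' : ∀ n, IsClubIn κ.ord (E' n))
    (h : ℕ → OSeq → Option OSeq)
    (hunif : ∀ f ∈ F, ∀ n : ℕ, ∃ a ∈ E, ∀ α ∈ E' n, a ≤ α →
      h n (restr f α) = some (restr f (sInf {β | α < β ∧ ∀ k < n, β ∈ E' k}))) :
    False := by
  have ho : ℵ₀ < κ.ord.cof := by rwa [hreg.cof_ord]
  have hC := IsClubIn.iInter ho hE'
  have hb : ∀ f ∈ F, ∃ b < κ.ord, Uniformizes h E' f b := fun f hf =>
    exists_lt_uniformizes ho fun n => (hunif f hf n).imp fun _ ⟨ha, hspec⟩ => ⟨hE.1 ha, hspec⟩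
  choose b hbκ hbunif using hb
  let A (f : F) : Ordinal := sInf ((⋂ n, E' n) ∩ Ici (b f f.2))
  have hA (f : F) : A f ∈ (⋂ n, E' n) ∩ Ici (b f f.2) := hC.sInf_inter_Ici_mem (hbκ f f.2)
  let code (f : F) : {s : OSeq // IsSeq κ s} :=
    ⟨restr f (A f), restr_isSeq (hC.1 (hA f).1) fun β hβ =>
      hFrange f f.2 β (hβ.trans (hC.1 (hA f).1))⟩
  have hcode : Function.Injective code := by
    rintro ⟨f, hf⟩ ⟨g, hg⟩ hfg
    have hres : restr f (A ⟨f, hf⟩) = restr g (A ⟨g, hg⟩) := congrArg Subtype.val hfg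
    have hAeq : A ⟨f, hf⟩ = A ⟨g, hg⟩ := congrArg Prod.fst hres
    rw [← hAeq] at hres
    have heq := forall_lt_eq_of_uniformizes ho hE' (hbunif f hf) (hbunif g hg) (hA _).1
      (hA ⟨f, hf⟩).2 (hAeq ▸ (hA ⟨g, hg⟩).2) hres
    by_contra hne
    obtain ⟨β, hβ, hfgβ⟩ := hFsep f hf g hg fun e => hne (Subtype.ext e)
    exact hfgβ (heq β hβ)
  have hle := (mk_le_of_injective hcode).trans (mk_isSeq_le hreg.aleph0_le hpow)
  rw [hF, Cardinal.lift_le] at hle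
  exact (Order.lt_succ κ).not_ge hle

/-- No system (E, ⟨Eⁿ⟩, ⟨hₙ⟩) as in the final argument of the main theorem can
exist when |F| = κ⁺: if each hₙ uniformizes the coloring
Hⁿ_f(α) = f↾min(⋂_{k<n} Eᵏ \ (α+1)) on the club Eⁿ ⊇ E, we get a contradiction. -/
theorem stmt10 (κ : Cardinal) (hreg : κ.IsRegular) (hunc : ℵ₀ < κ)
    (hpow : κ ^< κ = κ)
    (F : Set (Ordinal → Ordinal))
    (hF : #F = Cardinal.lift.{1,0} (Order.succ κ))
    (hFrange : ∀ f ∈ F, ∀ β < κ.ord, f β < κ.ord)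
    (hFsep : ∀ f ∈ F, ∀ g ∈ F, f ≠ g → ∃ β < κ.ord, f β ≠ g β)
    (E : Set Ordinal) (hE : IsClubIn κ.ord E)
    (E' : ℕ → Set Ordinal) (hE' : ∀ n, IsClubIn κ.ord (E' n))
    (hEE' : ∀ n, E ⊆ E' n)
    (h : ℕ → OSeq → Option OSeq)
    (hunif : ∀ f ∈ F, ∀ n : ℕ, ∃ a ∈ E, ∀ α ∈ E' n, a ≤ α →
      h n (restr f α) = some (restr f (sInf {β | α < β ∧ ∀ k < n, β ∈ E' k}))) :
    False :=
  stmt10_general κ hreg hunc hpow F hF hFrange hFsep E hE E' hE' h hunif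
end
end
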